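/- Type-tagging restores well-typedness under associativity: in the associative list model, if every list element is a tagged pair Pair(Const(code(type)), payload), then any unifier of two such tagged lists matches them element-by-element (no regrouping is possible), and hence equal-length tagged lists unify only via position-wise unification of payloads with equal tags. -/

import Mathlib

/-- Terms: constants (tags, fixed by substitutions), variables, free pairing,
and associative concatenation of lists of terms. -/
inductive Term (V : Type) : Type where
  | const : ℕ → Term V
  | var : V → Term V
  | pair : Term V → Term V → Term V
  | concat : List (Term V) → Term V

/-- Homomorphic extension of a substitution. -/
def Term.subst {V : Type} (σ : V → Term V) : Term V → Term V
  | .const n => .const n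
  | .var v => σ v
  | .pair s t => .pair (s.subst σ) (t.subst σ)
  | .concat l => .concat (l.attach.map (fun u => u.1.subst σ))
decreasing_by
  all_goals simp_wf
  all_goals try (have := List.sizeOf_lt_of_mem u.2)
  all_goals omega

/-- Flattening of a term into its list of associative top-level components:
concatenations are flattened, everything else (in particular free tagged
pairs) is a single component. -/
def Term.flatten {V : Type} : Term V → List (Term V)
  | .concat l => l.attach.flatMap (fun u => u.1.flatten)
  | t => [t]
decreasing_by
  all_goals simp_wf
  all_goals try (have := List.sizeOf_lt_of_mem u.2)
  all_goals omega

/-- Flattening of a list of terms (associative concatenation). -/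
def flattenL {V : Type} (l : List (Term V)) : List (Term V) :=
  l.flatMap Term.flatten

/-- `σ` unifies two lists in the associative theory if the flattened
instantiated lists coincide. -/
def UnifiesAssoc {V : Type} (σ : V → Term V) (l l' : List (Term V)) : Prop :=
  flattenL (l.map (Term.subst σ)) = flattenL (l'.map (Term.subst σ))

/-! Tagged pairs are free and never concatenations, so associative flattening leaves a list of
them untouched; unification then collapses to syntactic equality of the instantiated lists,
and the tags, being constants, survive instantiation unchanged. -/

@[simp]
lemma Term.flatten_pair {V : Type} (s t : Term V) : (Term.pair s t).flatten = [.pair s t] := by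
  rw [Term.flatten]
  intro l h
  cases h

@[simp]
lemma Term.subst_pair_const {V : Type} (σ : V → Term V) (k : ℕ) (t : Term V) :
    (Term.pair (.const k) t).subst σ = .pair (.const k) (t.subst σ) := by
  simp only [Term.subst]

lemma flattenL_eq_self {V : Type} {l : List (Term V)} (h : ∀ e ∈ l, e.flatten = [e]) :
    flattenL l = l :=
  (List.flatMap_congr h).trans (List.flatMap_singleton' l)

lemma flattenL_map_subst_of_tagged {V : Type} (σ : V → Term V) {l : List (Term V)}
    (hl : ∀ e ∈ l, ∃ (k : ℕ) (t : Term V), e = .pair (.const k) t) :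
    flattenL (l.map (Term.subst σ)) = l.map (Term.subst σ) := by
  refine flattenL_eq_self fun e he => ?_
  obtain ⟨a, ha, rfl⟩ := List.mem_map.mp he
  obtain ⟨k, t, rfl⟩ := hl a ha
  simp

lemma UnifiesAssoc.map_subst_eq_of_tagged {V : Type} {σ : V → Term V} {l l' : List (Term V)}
    (hl : ∀ e ∈ l, ∃ (k : ℕ) (t : Term V), e = .pair (.const k) t)
    (hl' : ∀ e ∈ l', ∃ (k : ℕ) (t : Term V), e = .pair (.const k) t)
    (hu : UnifiesAssoc σ l l') :
    l.map (Term.subst σ) = l'.map (Term.subst σ) := by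
  rwa [UnifiesAssoc, flattenL_map_subst_of_tagged σ hl, flattenL_map_subst_of_tagged σ hl'] at hu

lemma Term.tag_eq_of_subst_eq {V : Type} {σ : V → Term V} {k k' : ℕ} {t t' : Term V}
    (h : (Term.pair (.const k) t).subst σ = (Term.pair (.const k') t').subst σ) : k = k' := by
  simp only [Term.subst_pair_const, Term.pair.injEq, Term.const.injEq] at h
  exact h.1

/-- Type-tagging restores element-wise matching under associativity: if every
element of `l` and `l'` is a tagged pair `Pair(Const k, payload)` and `σ`
unifies `l` and `l'` in the associative theory, then `l` and `l'` have the
same length and, position by position, the tags are equal and `σ` unifies the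
corresponding elements (hence the payloads). -/
theorem stmt18 (V : Type) (σ : V → Term V) (l l' : List (Term V))
    (hl : ∀ e ∈ l, ∃ (k : ℕ) (t : Term V), e = .pair (.const k) t)
    (hl' : ∀ e ∈ l', ∃ (k : ℕ) (t : Term V), e = .pair (.const k) t)
    (hu : UnifiesAssoc σ l l') :
    l.length = l'.length ∧
    ∀ (i : ℕ) (hi : i < l.length) (hi' : i < l'.length),
      (l.get ⟨i, hi⟩).subst σ = (l'.get ⟨i, hi'⟩).subst σ ∧
      ∃ (k : ℕ) (t t' : Term V),
        l.get ⟨i, hi⟩ = .pair (.const k) t ∧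
        l'.get ⟨i, hi'⟩ = .pair (.const k) t' := by
  have hmap := hu.map_subst_eq_of_tagged hl hl'
  refine ⟨by simpa using congrArg List.length hmap, fun i hi hi' => ?_⟩
  have heq : (l.get ⟨i, hi⟩).subst σ = (l'.get ⟨i, hi'⟩).subst σ := by
    simpa [List.getElem?_eq_getElem hi, List.getElem?_eq_getElem hi'] using congrArg (·[i]?) hmap
  obtain ⟨k, t, ht⟩ := hl _ (l.get_mem ⟨i, hi⟩)
  obtain ⟨k', t', ht'⟩ := hl' _ (l'.get_mem ⟨i, hi'⟩)
  rw [ht, ht'] at heq ⊢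
  obtain rfl := Term.tag_eq_of_subst_eq heq
  exact ⟨heq, k, t, t', rfl, rfl⟩
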